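/- For every finite simple graph G, there exist a finite simple graph H, an injective map τ : V(H) → ℝ, and a 3-list-assignment L of H such that (H,L) is a realization of G and the ordered graph (H,τ) is M_5-free. -/

import Mathlib

/-- `(H, τ)` contains no induced ordered copy of the ordered pattern graph `P`
on vertices `0 < 1 < ⋯ < m - 1`. -/
def PatternFree {W : Type*} {m : ℕ} (H : SimpleGraph W) (τ : W → ℝ)
    (P : SimpleGraph (Fin m)) : Prop :=
  ¬ ∃ x : Fin m → W,
      (∀ i j : Fin m, i < j → τ (x i) < τ (x j)) ∧
      ∀ i j : Fin m, H.Adj (x i) (x j) ↔ P.Adj i j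

/-- The ordered graph `M₅`: five vertices `v₁ < ⋯ < v₅` with exactly the edges
`v₁v₅`, `v₂v₃`. -/
def M5 : SimpleGraph (Fin 5) :=
  SimpleGraph.fromEdgeSet {s(0, 4), s(1, 2)}

/-!
Column `t = 0, …, T` of the realization holds a copy of every vertex of `G`. The copies of a
vertex in consecutive columns are joined through three helpers with lists `{1,2}`, `{0,2}`,
`{0,1}`, which force both copies to get the same colour, and each edge `uv` of `G` becomes one
edge from a copy of `u` to a copy of `v` in the next column.

In the ordering, column `t` lists its copies by an arrangement `pos t` of `V`, followed by its
helpers grouped by vertex in the same order. Every edge then joins consecutive blocks, except the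
edges for `G`, which run from the last copy of a column to the first copy of the next one. An
`M₅` must therefore consist of two helper-to-copy edges whose vertices swap order by at least two
places; this is excluded by letting consecutive arrangements move each vertex by at most one place.
Such moves (adjacent transpositions) reach every arrangement, so the columns can run through
an arrangement with `u` last and `v` first for every edge `uv`.
-/

open Relation Equiv

section Walk

variable {α : Type*} {R : α → α → Prop} {s : Set α} {T : ℕ} {f : ℕ → α}

def IsPausingWalk (R : α → α → Prop) (s : Set α) (T : ℕ) (f : ℕ → α) : Prop :=
  (∀ t < T, R (f t) (f (t + 1))) ∧ ∀ x ∈ s, ∃ t < T, f t = x ∧ f (t + 1) = x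

theorem IsPausingWalk.cons (h : IsPausingWalk R s T f) {y : α} (hy : R y (f 0)) :
    ∃ g : ℕ → α, g 0 = y ∧ g 1 = f 0 ∧ IsPausingWalk R s (T + 1) g := by
  refine ⟨fun | 0 => y | t + 1 => f t, rfl, rfl, ?_, fun x hx => ?_⟩
  · rintro (_ | t) ht
    exacts [hy, h.1 t (by omega)]
  · obtain ⟨t, ht, h₁, h₂⟩ := h.2 x hx
    exact ⟨t + 1, by omega, h₁, h₂⟩

theorem Set.Finite.exists_isPausingWalk (hs : s.Finite) (hrefl : ∀ a, R a a)
    (hconn : ∀ a b, ReflTransGen R a b) (y : α) :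
    ∃ (T : ℕ) (f : ℕ → α), f 0 = y ∧ IsPausingWalk R s T f := by
  induction s, hs using Set.Finite.induction_on generalizing y with
  | empty => exact ⟨0, fun _ => y, rfl, by simp [IsPausingWalk]⟩
  | @insert x s _ _ ih =>
    obtain ⟨T, f, hf₀, hf⟩ := ih x
    obtain ⟨g, hg₀, hg₁, hg⟩ := hf.cons (y := x) (hf₀ ▸ hrefl x)
    have hgx : IsPausingWalk R (insert x s) (T + 1) g := by
      refine ⟨hg.1, ?_⟩
      rintro z (rfl | hz)
      exacts [⟨0, by omega, hg₀, hg₁.trans hf₀⟩, hg.2 z hz]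
    induction hconn y x using ReflTransGen.head_induction_on with
    | refl => exact ⟨T + 1, g, hg₀, hgx⟩
    | head hyz _ ih =>
      obtain ⟨T', g', hg'₀, hg'⟩ := ih
      obtain ⟨g'', hg''₀, -, hg''⟩ := hg'.cons (hg'₀ ▸ hyz)
      exact ⟨T' + 1, g'', hg''₀, hg''⟩

end Walk

section Arrangement

variable {V : Type*} {n : ℕ}

def MovesAtMostOne (p q : V ≃ Fin n) : Prop :=
  ∀ v, (q v : ℕ) ≤ p v + 1 ∧ (p v : ℕ) ≤ q v + 1

theorem MovesAtMostOne.refl (p : V ≃ Fin n) : MovesAtMostOne p p :=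
  fun _ => ⟨by omega, by omega⟩

theorem MovesAtMostOne.le_add_one_of_le {p q : V ≃ Fin n} (h : MovesAtMostOne p q) {v w : V}
    (hvw : (p v : ℕ) ≤ p w) : (q v : ℕ) ≤ q w + 1 := by
  rcases eq_or_ne v w with rfl | hne
  · omega
  · have : (p v : ℕ) ≠ p w := Fin.val_injective.ne (p.injective.ne hne)
    have := (h v).1
    have := (h w).2
    omega

theorem movesAtMostOne_trans_swap {m : ℕ} (p : V ≃ Fin (m + 1)) (i : Fin m) :
    MovesAtMostOne p (p.trans (swap i.castSucc i.succ)) := by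
  intro v
  rw [Equiv.trans_apply, swap_apply_def]
  split_ifs with h₁ h₂ <;> simp only [Fin.ext_iff, Fin.val_castSucc, Fin.val_succ] at * <;> omega

theorem reflTransGen_movesAtMostOne (p q : V ≃ Fin n) : ReflTransGen MovesAtMostOne p q := by
  cases n with
  | zero => exact (Equiv.ext fun v => (p v).elim0 : p = q) ▸ .refl
  | succ m =>
    have hreach : ∀ π ∈ Submonoid.closure (Set.range fun i : Fin m => swap i.castSucc i.succ),
        ∀ r : V ≃ Fin (m + 1), ReflTransGen MovesAtMostOne r (r.trans π) := by
      intro π hπ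
      induction hπ using Submonoid.closure_induction with
      | mem π hπ =>
        obtain ⟨i, rfl⟩ := hπ
        exact fun r => .single (movesAtMostOne_trans_swap r i)
      | one => exact fun r => .refl
      | mul π₁ π₂ _ _ ih₁ ih₂ => exact fun r => (ih₂ r).trans (ih₁ (r.trans π₂))
    simpa [← Equiv.trans_assoc] using
      hreach (p.symm.trans q) (by simp [Perm.mclosure_swap_castSucc_succ]) p

theorem exists_equiv_apply_eq_last_apply_eq_zero (e : V ≃ Fin n) {u v : V} (huv : u ≠ v) :
    ∃ p : V ≃ Fin n, (p u : ℕ) = n - 1 ∧ (p v : ℕ) = 0 := by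
  have hn : 2 ≤ n := by
    have : (e u : ℕ) ≠ e v := Fin.val_injective.ne (e.injective.ne huv)
    omega
  let top : Fin n := ⟨n - 1, by omega⟩
  let bot : Fin n := ⟨0, by omega⟩
  let p₁ := e.trans (swap (e u) top)
  have hp₁ : p₁ u = top := by simp [p₁]
  have hne : p₁ v ≠ top := hp₁ ▸ p₁.injective.ne huv.symm
  have htb : top ≠ bot := fun h => by simp [top, bot, Fin.ext_iff] at h; omega
  refine ⟨p₁.trans (swap (p₁ v) bot), ?_, by simp [bot]⟩
  simp [hp₁, swap_apply_of_ne_of_ne hne.symm htb, top]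

theorem exists_arrangements (G : SimpleGraph V) (e : V ≃ Fin n) :
    ∃ (T : ℕ) (pos : ℕ → V ≃ Fin n), (∀ t < T, MovesAtMostOne (pos t) (pos (t + 1))) ∧
      ∀ u v, G.Adj u v → ∃ t < T, (pos t u : ℕ) = n - 1 ∧ (pos (t + 1) v : ℕ) = 0 := by
  have := Finite.of_equiv _ e.symm
  choose p hp using fun uv : {uv : V × V // G.Adj uv.1 uv.2} =>
    exists_equiv_apply_eq_last_apply_eq_zero e uv.2.ne
  obtain ⟨T, pos, -, hpos, hvisit⟩ :=
    (Set.finite_range p).exists_isPausingWalk MovesAtMostOne.refl reflTransGen_movesAtMostOne e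
  refine ⟨T, pos, hpos, fun u v huv => ?_⟩
  obtain ⟨t, ht, h₁, h₂⟩ := hvisit _ ⟨⟨(u, v), huv⟩, rfl⟩
  exact ⟨t, ht, h₁ ▸ (hp _).1, h₂ ▸ (hp _).2⟩

end Arrangement

theorem Nat.mul_add_lt_mul_add_iff {M a b i j : ℕ} (hi : i < M) (hj : j < M) :
    M * a + i < M * b + j ↔ a < b ∨ a = b ∧ i < j := by
  constructor
  · intro h
    rcases lt_trichotomy a b with hab | rfl | hab
    · exact .inl hab
    · exact .inr ⟨rfl, by omega⟩
    · nlinarith [Nat.mul_le_mul_left M (Nat.succ_le_of_lt hab)]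
  · rintro (hab | ⟨rfl, hij⟩)
    · nlinarith [Nat.mul_le_mul_left M (Nat.succ_le_of_lt hab)]
    · omega

theorem Fin.eq_of_forall_exists_ne (c d : Fin 3) (h : ∀ s : Fin 3, ∃ e, e ≠ s ∧ e ≠ c ∧ e ≠ d) :
    c = d := by
  revert c d
  decide

namespace Gadget

variable {V : Type*} (G : SimpleGraph V) {n T : ℕ} (pos : ℕ → V ≃ Fin n)

/-- `inl (t, v)` is the copy of `v` in column `t`; `inr (t, v, s)` is the helper with list `{s}ᶜ`
between the copies of `v` in columns `t` and `t + 1`. -/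
abbrev Vertex (T : ℕ) (V : Type*) := (Fin (T + 1) × V) ⊕ (Fin T × V × Fin 3)

inductive Edge : Vertex T V → Vertex T V → Prop
  | copy_helper (t : Fin T) (v : V) (s : Fin 3) : Edge (.inl (t.castSucc, v)) (.inr (t, v, s))
  | helper_copy (t : Fin T) (v : V) (s : Fin 3) : Edge (.inr (t, v, s)) (.inl (t.succ, v))
  | link (t : Fin T) {u v : V} (huv : G.Adj u v) (hu : (pos t u : ℕ) = n - 1)
      (hv : (pos (t + 1) v : ℕ) = 0) : Edge (.inl (t.castSucc, u)) (.inl (t.succ, v))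

def graph : SimpleGraph (Vertex T V) := SimpleGraph.fromRel (Edge G pos)

def lists : Vertex T V → Finset (Fin 3)
  | .inl _ => Finset.univ
  | .inr (_, _, s) => {s}ᶜ

def block : Vertex T V → ℕ
  | .inl (t, _) => 2 * t
  | .inr (t, _, _) => 2 * t + 1

def offset : Vertex T V → ℕ
  | .inl (t, v) => pos t v
  | .inr (t, v, s) => 3 * pos t v + s

def place (x : Vertex T V) : ℕ := 3 * n * block x + offset pos x

theorem offset_lt (x : Vertex T V) : offset pos x < 3 * n := by
  rcases x with ⟨t, v⟩ | ⟨t, v, s⟩ <;> simp only [offset] <;> omega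

variable {pos} in
theorem place_lt_place_iff {x y : Vertex T V} :
    place pos x < place pos y ↔
      block x < block y ∨ block x = block y ∧ offset pos x < offset pos y :=
  Nat.mul_add_lt_mul_add_iff (offset_lt pos x) (offset_lt pos y)

theorem place_injective : Function.Injective (place (T := T) pos) := by
  intro x y h
  have hxy := place_lt_place_iff.not.1 h.not_lt
  have hyx := place_lt_place_iff.not.1 h.symm.not_lt
  obtain ⟨hb, ho⟩ : block x = block y ∧ offset pos x = offset pos y := by omega
  rcases x with ⟨t, v⟩ | ⟨t, v, s⟩ <;> rcases y with ⟨t', v'⟩ | ⟨t', v', s'⟩ <;>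
    simp only [block, offset] at hb ho <;> try omega
  · obtain rfl : t = t' := Fin.ext (by omega)
    rw [(pos t).injective (Fin.ext ho)]
  · obtain rfl : t = t' := Fin.ext (by omega)
    obtain rfl : s = s' := Fin.ext (by omega)
    rw [(pos t).injective (Fin.ext (by omega) : pos t v = pos t v')]

variable {G pos}

theorem Edge.place_lt {x y : Vertex T V} (h : Edge G pos x y) : place pos x < place pos y := by
  rw [place_lt_place_iff]
  cases h <;> simp only [block, offset, Fin.val_castSucc, Fin.val_succ] <;> omega

theorem graph_adj_of_edge {x y : Vertex T V} (h : Edge G pos x y) : (graph G pos).Adj x y :=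
  (SimpleGraph.fromRel_adj _ _ _).2 ⟨ne_of_apply_ne (place pos) h.place_lt.ne, .inl h⟩

theorem edge_of_graph_adj {x y : Vertex T V} (h : (graph G pos).Adj x y)
    (hxy : place pos x < place pos y) : Edge G pos x y :=
  ((SimpleGraph.fromRel_adj _ _ _).1 h).2.resolve_right fun h' => h'.place_lt.not_gt hxy

theorem not_edge_nested (hpos : ∀ t < T, MovesAtMostOne (pos t) (pos (t + 1)))
    {a b c d e : Vertex T V} (hae : Edge G pos a e) (hbc : Edge G pos b c)
    (hab : place pos a < place pos b) (hcd : place pos c < place pos d)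
    (hde : place pos d < place pos e) : False := by
  rw [place_lt_place_iff] at hab hcd hde
  generalize block d = bd, offset pos d = od at hcd hde
  rcases hae with ⟨t, v, s⟩ | ⟨t, v, s⟩ | ⟨t, -, hu, hv⟩ <;>
    rcases hbc with ⟨t', w, s'⟩ | ⟨t', w, s'⟩ | ⟨t', -, hu', hv'⟩ <;>
    simp only [block, offset, Fin.val_castSucc, Fin.val_succ] at hab hcd hde <;> try omega
  obtain rfl : t = t' := Fin.ext (by omega)
  have := (hpos t t.isLt).le_add_one_of_le (v := v) (w := w) (by omega)
  omega

theorem patternFree_M5 (hpos : ∀ t < T, MovesAtMostOne (pos t) (pos (t + 1))) :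
    PatternFree (graph (T := T) G pos) (fun x => (place pos x : ℝ)) M5 := by
  rintro ⟨x, hx, hadj⟩
  have hlt (i j : Fin 5) (hij : i < j) : place pos (x i) < place pos (x j) :=
    Nat.cast_lt.mp (hx i j hij)
  have hedge (i j : Fin 5) (hM5 : M5.Adj i j) (hij : i < j) : Edge G pos (x i) (x j) :=
    edge_of_graph_adj ((hadj i j).2 hM5) (hlt i j hij)
  exact not_edge_nested hpos (hedge 0 4 (by simp [M5]) (by decide))
    (hedge 1 2 (by simp [M5]) (by decide)) (hlt 0 1 (by decide)) (hlt 2 3 (by decide))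
    (hlt 3 4 (by decide))

section Colouring

variable {f : Vertex T V → Fin 3}

/-- If the two copies had colours `c ≠ d`, the helper with list `{c, d}` would have no colour. -/
theorem colour_castSucc_eq_succ (hf : ∀ x y, (graph G pos).Adj x y → f x ≠ f y)
    (hL : ∀ x, f x ∈ lists x) (t : Fin T) (v : V) :
    f (.inl (t.castSucc, v)) = f (.inl (t.succ, v)) :=
  Fin.eq_of_forall_exists_ne _ _ fun s => ⟨f (.inr (t, v, s)),
    by simpa [lists] using hL (.inr (t, v, s)),
    (hf _ _ (graph_adj_of_edge (.copy_helper t v s))).symm,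
    hf _ _ (graph_adj_of_edge (.helper_copy t v s))⟩

theorem colour_eq_colour_zero (hf : ∀ x y, (graph G pos).Adj x y → f x ≠ f y)
    (hL : ∀ x, f x ∈ lists x) (t : Fin (T + 1)) (v : V) : f (.inl (t, v)) = f (.inl (0, v)) := by
  induction t using Fin.induction with
  | zero => rfl
  | succ t ih => rw [← colour_castSucc_eq_succ hf hL, ih]

theorem colour_zero_ne_of_adj (hf : ∀ x y, (graph G pos).Adj x y → f x ≠ f y)
    (hL : ∀ x, f x ∈ lists x)
    (hcover : ∀ u v, G.Adj u v → ∃ t < T, (pos t u : ℕ) = n - 1 ∧ (pos (t + 1) v : ℕ) = 0)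
    {u v : V} (huv : G.Adj u v) : f (.inl (0, u)) ≠ f (.inl (0, v)) := by
  obtain ⟨t, ht, hu, hv⟩ := hcover u v huv
  have := hf _ _ (graph_adj_of_edge (.link ⟨t, ht⟩ huv hu hv))
  rwa [colour_eq_colour_zero hf hL _ u, colour_eq_colour_zero hf hL _ v] at this

end Colouring

theorem exists_colouring_extend (g : V → Fin 3) (hg : ∀ u v, G.Adj u v → g u ≠ g v) :
    ∃ f : Vertex T V → Fin 3, (∀ x y, (graph G pos).Adj x y → f x ≠ f y) ∧
      (∀ x, f x ∈ lists x) ∧ ∀ v, f (.inl (0, v)) = g v := by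
  choose other hother using (by decide : ∀ s c : Fin 3, ∃ e, e ≠ s ∧ e ≠ c)
  let f : Vertex T V → Fin 3
    | .inl (_, v) => g v
    | .inr (_, v, s) => other s (g v)
  have hedge : ∀ x y, Edge G pos x y → f x ≠ f y := by
    rintro _ _ (⟨t, v, s⟩ | ⟨t, v, s⟩ | ⟨t, huv, -, -⟩)
    exacts [(hother s (g v)).2.symm, (hother s (g v)).2, hg _ _ huv]
  refine ⟨f, fun x y hxy => ?_, ?_, fun v => rfl⟩
  · rcases ((SimpleGraph.fromRel_adj _ _ _).1 hxy).2 with h | h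
    exacts [hedge x y h, (hedge y x h).symm]
  · rintro (_ | ⟨t, v, s⟩)
    · simp [lists]
    · simpa [lists] using (hother s (g v)).1

end Gadget

/-- For every graph `G` there is a realization `(H, L)` of `G` (witnessed by the
injection `ι` of the vertices of `G` into those of `H`) together with an injective
ordering `τ` such that `(H, τ)` is `M_5`-free. -/
theorem realization_M5_free
    {VG : Type*} [Fintype VG] (G : SimpleGraph VG) :
    ∃ (W : Type) (_ : Fintype W) (H : SimpleGraph W) (ι : VG → W) (τ : W → ℝ)
      (L : W → Finset (Fin 3)),
      Function.Injective ι ∧ Function.Injective τ ∧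
      (∀ u : VG, L (ι u) = (Finset.univ : Finset (Fin 3))) ∧
      (∀ f : W → Fin 3, (∀ x y, H.Adj x y → f x ≠ f y) → (∀ x, f x ∈ L x) →
        ∀ u v : VG, G.Adj u v → f (ι u) ≠ f (ι v)) ∧
      (∀ g : VG → Fin 3, (∀ u v, G.Adj u v → g u ≠ g v) →
        ∃ f : W → Fin 3, (∀ x y, H.Adj x y → f x ≠ f y) ∧ (∀ x, f x ∈ L x) ∧
          ∀ u : VG, f (ι u) = g u) ∧
      PatternFree H τ M5 := by
  let e := Fintype.equivFin VG
  let G' := G.comap e.symm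
  obtain ⟨T, pos, hpos, hcover⟩ := exists_arrangements G' (Equiv.refl _)
  refine ⟨Gadget.Vertex T (Fin (Fintype.card VG)), inferInstance, Gadget.graph G' pos,
    fun u => .inl (0, e u), fun x => Gadget.place pos x, Gadget.lists,
    fun u v h => e.injective (by simpa using h),
    Nat.cast_injective.comp (Gadget.place_injective pos), fun _ => rfl,
    fun f hf hL u v huv => ?_, fun g hg => ?_, Gadget.patternFree_M5 hpos⟩
  · exact Gadget.colour_zero_ne_of_adj hf hL hcover (by simpa [G'] using huv)
  · obtain ⟨f, hf, hL, hfg⟩ :=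
      Gadget.exists_colouring_extend (G := G') (pos := pos) (g ∘ e.symm) fun u v h => hg _ _ h
    exact ⟨f, hf, hL, fun u => by simp [hfg]⟩
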